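/- Let θ be drawn from Beta(S+1, F+1) where S + F = ℓ and the empirical mean is μ̃ = S/ℓ. Then for Δ ∈ (0,1], P(θ > μ̃ + Δ/4) = F^{Binom}_{ℓ+1, μ̃+Δ/4}(S) ≤ F^{Binom}_{ℓ, μ̃+Δ/4}(S) ≤ exp(−2Δ²ℓ/16). -/

import Mathlib

open intervalIntegral

/-- The CDF of the Beta distribution with integer parameters `S+1`, `F+1`. -/
noncomputable def betaCdf (S F : ℕ) (y : ℝ) : ℝ :=
  (∫ x in (0:ℝ)..y, x ^ S * (1 - x) ^ F) / (∫ x in (0:ℝ)..(1:ℝ), x ^ S * (1 - x) ^ F)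

/-- The CDF of the Binomial distribution with `n` trials and success probability `p`,
evaluated at a real threshold `r`. -/
noncomputable def binomCdf (n : ℕ) (p r : ℝ) : ℝ :=
  ∑ j ∈ Finset.range (n + 1),
    if (j : ℝ) ≤ r then (n.choose j : ℝ) * p ^ j * (1 - p) ^ (n - j) else 0

/-!
With `n = S + F`, the Beta density `x ^ S * (1 - x) ^ F` is a multiple of the Bernstein polynomial
`b_{n,S}`, and `∑_{j ≤ S} b_{n+1,j}` has derivative `-(n + 1) b_{n,S}` and value `1` at `0`;
integrating gives `betaCdf S F y = 1 - binomCdf (n + 1) y S`. Pascal's rule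
`b_{n+1,j+1} = (1 - x) b_{n,j+1} + x b_{n,j}` writes the CDF with `n + 1` trials as a convex
combination of the CDFs with `n` trials at `S` and at `S - 1`, whence the monotonicity. The last
bound is Chernoff's bound at `t = Δ`, with the Bernoulli moment generating function controlled by
Hoeffding's lemma.
-/

open Finset Polynomial

section Bernstein

variable {R : Type*} [CommRing R]

lemma bernsteinPolynomial_eval (n ν : ℕ) (x : R) :
    (bernsteinPolynomial R n ν).eval x = n.choose ν * x ^ ν * (1 - x) ^ (n - ν) := by
  simp [bernsteinPolynomial]

lemma derivative_sum_range_bernsteinPolynomial (n k : ℕ) :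
    derivative (∑ j ∈ range (k + 1), bernsteinPolynomial R (n + 1) j) =
      -((n + 1) * bernsteinPolynomial R n k) := by
  induction k with
  | zero =>
    rw [zero_add, sum_range_one, bernsteinPolynomial.derivative_zero, Nat.add_sub_cancel]
    push_cast
    ring
  | succ k ih =>
    rw [sum_range_succ, derivative_add, ih, bernsteinPolynomial.derivative_succ_aux]
    ring

lemma eval_bernsteinPolynomial_succ_succ (n k : ℕ) (x : R) :
    (bernsteinPolynomial R (n + 1) (k + 1)).eval x =
      (1 - x) * (bernsteinPolynomial R n (k + 1)).eval x +
        x * (bernsteinPolynomial R n k).eval x := by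
  simp only [bernsteinPolynomial_eval, Nat.choose_succ_succ, Nat.cast_add, Nat.add_sub_add_right]
  rcases lt_or_ge k n with hkn | hkn
  · obtain ⟨m, rfl⟩ := Nat.exists_eq_add_of_lt hkn
    rw [show k + m + 1 - k = m + 1 by omega, show k + m + 1 - (k + 1) = m by omega]
    ring
  · rw [Nat.choose_eq_zero_of_lt (by omega : n < k + 1), Nat.sub_eq_zero_of_le hkn]
    ring

lemma sum_range_eval_bernsteinPolynomial_succ (n k : ℕ) (x : R) :
    ∑ j ∈ range (k + 1), (bernsteinPolynomial R (n + 1) j).eval x =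
      (1 - x) * ∑ j ∈ range (k + 1), (bernsteinPolynomial R n j).eval x +
        x * ∑ j ∈ range k, (bernsteinPolynomial R n j).eval x := by
  induction k with
  | zero =>
    simp only [zero_add, sum_range_one, range_zero, sum_empty, bernsteinPolynomial_eval,
      Nat.choose_zero_right, Nat.sub_zero]
    ring
  | succ k ih =>
    rw [sum_range_succ, ih, eval_bernsteinPolynomial_succ_succ, sum_range_succ _ (k + 1),
      sum_range_succ _ k]
    ring

end Bernstein

lemma bernsteinPolynomial_eval_nonneg (n ν : ℕ) {x : ℝ} (hx0 : 0 ≤ x) (hx1 : x ≤ 1) :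
    0 ≤ (bernsteinPolynomial ℝ n ν).eval x := by
  rw [bernsteinPolynomial_eval]
  exact mul_nonneg (by positivity) (pow_nonneg (sub_nonneg.2 hx1) _)

lemma integral_eval_bernsteinPolynomial (n k : ℕ) (y : ℝ) :
    (n + 1) * ∫ x in (0:ℝ)..y, (bernsteinPolynomial ℝ n k).eval x =
      1 - ∑ j ∈ range (k + 1), (bernsteinPolynomial ℝ (n + 1) j).eval y := by
  set P := ∑ j ∈ range (k + 1), bernsteinPolynomial ℝ (n + 1) j
  have hP0 : P.eval 0 = 1 := by
    simp [P, eval_finsetSum, bernsteinPolynomial.eval_at_0]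
  have hP' : ∀ x, (derivative P).eval x = -((n + 1) * (bernsteinPolynomial ℝ n k).eval x) := by
    intro x
    rw [derivative_sum_range_bernsteinPolynomial]
    simp
  have hFTC : ∫ x in (0:ℝ)..y, (derivative P).eval x = P.eval y - P.eval 0 :=
    integral_eq_sub_of_hasDerivAt (fun x _ ↦ P.hasDerivAt x)
      ((Polynomial.continuous _).intervalIntegrable _ _)
  simp only [hP', integral_neg, integral_const_mul, hP0] at hFTC
  simp only [P, eval_finsetSum] at hFTC
  linarith

lemma binomCdf_natCast_eq_sum {n k : ℕ} (hk : k ≤ n) (p : ℝ) :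
    binomCdf n p k = ∑ j ∈ range (k + 1), (bernsteinPolynomial ℝ n j).eval p := by
  rw [binomCdf, ← sum_range_add_sum_Ico _ (by omega : k + 1 ≤ n + 1)]
  have hhigh : ∀ j ∈ Ico (k + 1) (n + 1),
      (if (j : ℝ) ≤ k then (n.choose j : ℝ) * p ^ j * (1 - p) ^ (n - j) else 0) = 0 := by
    intro j hj
    rw [if_neg (by rw [mem_Ico] at hj; exact_mod_cast (by omega : ¬ j ≤ k))]
  rw [sum_eq_zero hhigh, add_zero]
  refine sum_congr rfl fun j hj ↦ ?_
  rw [if_pos (by rw [mem_range] at hj; exact_mod_cast (by omega : j ≤ k)),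
    bernsteinPolynomial_eval]

lemma betaCdf_eq_one_sub_binomCdf (S F : ℕ) (y : ℝ) :
    betaCdf S F y = 1 - binomCdf (S + F + 1) y S := by
  set B := bernsteinPolynomial ℝ (S + F) S
  have hchoose : ((S + F).choose S : ℝ) ≠ 0 :=
    Nat.cast_ne_zero.2 (Nat.choose_pos (Nat.le_add_right S F)).ne'
  have hB : ∀ x : ℝ, x ^ S * (1 - x) ^ F = B.eval x / (S + F).choose S := by
    intro x
    rw [bernsteinPolynomial_eval, Nat.add_sub_cancel_left]
    field_simp
  have hB1 : ((S + F : ℕ) + 1 : ℝ) * ∫ x in (0:ℝ)..1, B.eval x = 1 := by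
    rw [integral_eval_bernsteinPolynomial, sub_eq_self]
    refine sum_eq_zero fun j hj ↦ ?_
    rw [bernsteinPolynomial.eval_at_1, if_neg (by rw [mem_range] at hj; omega)]
  have hBy := integral_eval_bernsteinPolynomial (S + F) S y
  rw [betaCdf, binomCdf_natCast_eq_sum (by omega)]
  simp only [hB, intervalIntegral.integral_div]
  rw [div_div_div_cancel_right₀ hchoose, ← hBy, eq_inv_of_mul_eq_one_right hB1, div_inv_eq_mul, mul_comm]

lemma binomCdf_succ_le {n k : ℕ} (hk : k ≤ n) {p : ℝ} (hp0 : 0 ≤ p) (hp1 : p ≤ 1) :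
    binomCdf (n + 1) p k ≤ binomCdf n p k := by
  rw [binomCdf_natCast_eq_sum (by omega), binomCdf_natCast_eq_sum hk, sum_range_eval_bernsteinPolynomial_succ,
    sum_range_succ _ k]
  nlinarith [mul_nonneg hp0 (bernsteinPolynomial_eval_nonneg n k hp0 hp1)]

open ProbabilityTheory MeasureTheory in
lemma mul_exp_neg_add_one_sub_le {q : ℝ} (hq0 : 0 ≤ q) (hq1 : q ≤ 1) (t : ℝ) :
    q * Real.exp (-t) + (1 - q) ≤ Real.exp (t ^ 2 / 8 - t * q) := by
  let μ : Measure Bool := Ber(true, false, ⟨q, hq0, hq1⟩)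
  let ξ : Bool → ℝ := fun b ↦ if b then 1 else 0
  have hξ : ∀ b, ξ b ∈ Set.Icc (0 : ℝ) 1 := fun b ↦ by cases b <;> simp [ξ]
  have hoeffding := (hasSubgaussianMGF_of_mem_Icc (μ := μ) Measurable.of_discrete.aemeasurable
    (ae_of_all _ hξ)).mgf_le (-t)
  have hmgf : mgf (fun b ↦ ξ b - μ[ξ]) μ (-t) =
      (q * Real.exp (-t) + (1 - q)) * Real.exp (t * q) := by
    simp only [mgf, integral_bernoulliMeasure, μ, ξ]
    norm_num
    rw [add_mul, mul_assoc, ← Real.exp_add]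
    ring_nf
  rw [Real.exp_sub, le_div_iff₀ (Real.exp_pos _), ← hmgf]
  refine hoeffding.trans_eq (congrArg Real.exp ?_)
  norm_num
  ring

lemma binomCdf_le_exp_mul {n : ℕ} {q : ℝ} (hq0 : 0 ≤ q) (hq1 : q ≤ 1) (r : ℝ) {t : ℝ}
    (ht : 0 ≤ t) : binomCdf n q r ≤ Real.exp (t * r) * (q * Real.exp (-t) + (1 - q)) ^ n := by
  have hterm : ∀ j ∈ range (n + 1),
      (if (j : ℝ) ≤ r then (n.choose j : ℝ) * q ^ j * (1 - q) ^ (n - j) else 0) ≤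
        Real.exp (t * r) * ((q * Real.exp (-t)) ^ j * (1 - q) ^ (n - j) * n.choose j) := by
    intro j _
    have hB : 0 ≤ (n.choose j : ℝ) * q ^ j * (1 - q) ^ (n - j) := by
      simpa only [bernsteinPolynomial_eval] using bernsteinPolynomial_eval_nonneg n j hq0 hq1
    have hweight : Real.exp (t * r) * ((q * Real.exp (-t)) ^ j * (1 - q) ^ (n - j) * n.choose j) =
        Real.exp (t * (r - j)) * ((n.choose j : ℝ) * q ^ j * (1 - q) ^ (n - j)) := by
      rw [mul_sub, Real.exp_sub, mul_comm t j, Real.exp_nat_mul, mul_pow, Real.exp_neg, inv_pow]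
      field_simp
    rw [hweight]
    split_ifs with hj
    · exact le_mul_of_one_le_left hB (Real.one_le_exp (mul_nonneg ht (sub_nonneg.2 hj)))
    · exact mul_nonneg (Real.exp_pos _).le hB
  rw [binomCdf, add_pow, mul_sum]
  exact sum_le_sum hterm

lemma binomCdf_le_exp_neg_two_mul_sq {n : ℕ} {q d r : ℝ} (hq0 : 0 ≤ q) (hq1 : q ≤ 1)
    (hd : 0 ≤ d) (hr : r ≤ n * (q - d)) : binomCdf n q r ≤ Real.exp (-2 * n * d ^ 2) := by
  have hbase : 0 ≤ q * Real.exp (-(4 * d)) + (1 - q) := by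
    have := mul_nonneg hq0 (Real.exp_pos (-(4 * d))).le
    linarith
  calc binomCdf n q r
      ≤ Real.exp (4 * d * r) * (q * Real.exp (-(4 * d)) + (1 - q)) ^ n :=
        binomCdf_le_exp_mul hq0 hq1 r (by positivity)
    _ ≤ Real.exp (4 * d * r) * Real.exp ((4 * d) ^ 2 / 8 - 4 * d * q) ^ n := by
        gcongr
        exact mul_exp_neg_add_one_sub_le hq0 hq1 _
    _ = Real.exp (4 * d * r + n * ((4 * d) ^ 2 / 8 - 4 * d * q)) := by
        rw [← Real.exp_nat_mul, ← Real.exp_add]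
    _ ≤ Real.exp (-2 * n * d ^ 2) := by
        gcongr
        nlinarith [mul_le_mul_of_nonneg_left hr (by positivity : 0 ≤ 4 * d)]

theorem ts_sample_tail_general (S F : ℕ) (hℓ : 1 ≤ S + F) (Δ : ℝ)
    (hΔ0 : 0 < Δ)
    (hq : (S : ℝ) / (S + F) + Δ / 4 ≤ 1) :
    1 - betaCdf S F ((S : ℝ) / (S + F) + Δ / 4) =
      binomCdf (S + F + 1) ((S : ℝ) / (S + F) + Δ / 4) S ∧
    binomCdf (S + F + 1) ((S : ℝ) / (S + F) + Δ / 4) S ≤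
      binomCdf (S + F) ((S : ℝ) / (S + F) + Δ / 4) S ∧
    binomCdf (S + F) ((S : ℝ) / (S + F) + Δ / 4) S ≤
      Real.exp (-(2 * Δ ^ 2 * (S + F : ℕ)) / 16) := by
  set p := (S : ℝ) / (S + F) + Δ / 4
  have hp0 : 0 ≤ p := by positivity
  have hℓ' : (S : ℝ) + F ≠ 0 := by exact_mod_cast (by omega : S + F ≠ 0)
  refine ⟨by rw [betaCdf_eq_one_sub_binomCdf, sub_sub_cancel],
    binomCdf_succ_le (Nat.le_add_right S F) hp0 hq, ?_⟩
  calc binomCdf (S + F) p S ≤ Real.exp (-2 * (S + F : ℕ) * (Δ / 4) ^ 2) := by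
        refine binomCdf_le_exp_neg_two_mul_sq hp0 hq (by positivity) (le_of_eq ?_)
        rw [add_sub_cancel_right, Nat.cast_add, mul_div_cancel₀ _ hℓ']
    _ = Real.exp (-(2 * Δ ^ 2 * (S + F : ℕ)) / 16) := by ring_nf

/-- Thompson sample tail bound: for `θ ~ Beta(S+1, F+1)` with `ℓ = S + F ≥ 1`,
empirical mean `μ̃ = S/ℓ` and `Δ ∈ (0,1]` with `μ̃ + Δ/4 ≤ 1`,
`P(θ > μ̃ + Δ/4) = F^{Binom}_{ℓ+1, μ̃+Δ/4}(S) ≤ F^{Binom}_{ℓ, μ̃+Δ/4}(S)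
≤ exp(−2Δ²ℓ/16)`. -/
theorem ts_sample_tail (S F : ℕ) (hℓ : 1 ≤ S + F) (Δ : ℝ)
    (hΔ0 : 0 < Δ) (hΔ1 : Δ ≤ 1)
    (hq : (S : ℝ) / (S + F) + Δ / 4 ≤ 1) :
    1 - betaCdf S F ((S : ℝ) / (S + F) + Δ / 4) =
      binomCdf (S + F + 1) ((S : ℝ) / (S + F) + Δ / 4) S ∧
    binomCdf (S + F + 1) ((S : ℝ) / (S + F) + Δ / 4) S ≤
      binomCdf (S + F) ((S : ℝ) / (S + F) + Δ / 4) S ∧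
    binomCdf (S + F) ((S : ℝ) / (S + F) + Δ / 4) S ≤
      Real.exp (-(2 * Δ ^ 2 * (S + F : ℕ)) / 16) :=
  ts_sample_tail_general S F hℓ Δ hΔ0 hq
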